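/- Let t ∈ ℕ, let c : Fin 2^t → ZMod 2, and define the binary sequence s(n) = Σ_{k=0}^{2^t−1} c_k · (C(n, k) mod 2). Then for all n < 2^t, the reverse sequence satisfies s(2^t − 1 − n) = Σ_{k=0}^{2^t−1} c_k · Σ_{i=0}^{k} (C(k, i) mod 2) · (C(n, i) mod 2). (The B-representation of the reverse of a sequence of period 2^t with coefficients c is obtained by replacing each binomial sequence C(·, k) by Σ_{i≤k} C(k, i) C(·, i) mod 2, using the rows of the binary Sierpinski triangle.) -/

import Mathlib

lemma vander_sym (n k : ℕ) :
    (n + k).choose k = ∑ i ∈ Finset.range (k + 1), k.choose i * n.choose i := by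
  rw [Nat.add_choose_eq, Finset.Nat.sum_antidiagonal_eq_sum_range_succ_mk]
  refine Finset.sum_congr rfl fun i hi => ?_
  rw [Finset.mem_range] at hi
  rw [Nat.choose_symm (by omega), mul_comm]

lemma lucas2 (a b : ℕ) :
    ((a.choose b : ZMod 2)) =
      ((a % 2).choose (b % 2) : ZMod 2) * ((a / 2).choose (b / 2) : ZMod 2) := by
  have h := Choose.choose_modEq_choose_mod_mul_choose_div_nat (p := 2) (n := a) (k := b)
  have := (ZMod.natCast_eq_natCast_iff _ _ _).mpr h
  push_cast at this
  exact this

lemma key (t : ℕ) : ∀ n k : ℕ, n < 2 ^ t → k < 2 ^ t →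
    (((2 ^ t - 1 - n).choose k : ZMod 2)) = ((n + k).choose k : ZMod 2) := by
  induction t with
  | zero =>
    intro n k hn hk
    interval_cases n
    interval_cases k
    rfl
  | succ t ih =>
    intro n k hn hk
    have hP : 0 < 2 ^ t := Nat.pow_pos (by norm_num)
    rw [pow_succ] at hn hk ⊢
    rw [lucas2 (2 ^ t * 2 - 1 - n) k, lucas2 (n + k) k]
    have hm2 : (2 ^ t * 2 - 1 - n) % 2 = 1 - n % 2 := by omega
    have hd2 : (2 ^ t * 2 - 1 - n) / 2 = 2 ^ t - 1 - n / 2 := by omega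
    rw [hm2, hd2, ih (n / 2) (k / 2) (by omega) (by omega)]
    rcases Nat.mod_two_eq_zero_or_one n with hn2 | hn2 <;>
      rcases Nat.mod_two_eq_zero_or_one k with hk2 | hk2
    · have h1 : (n + k) % 2 = 0 := by omega
      have h2 : (n + k) / 2 = n / 2 + k / 2 := by omega
      rw [hn2, hk2, h1, h2]; norm_num
    · have h1 : (n + k) % 2 = 1 := by omega
      have h2 : (n + k) / 2 = n / 2 + k / 2 := by omega
      rw [hn2, hk2, h1, h2]
    · have h1 : (n + k) % 2 = 1 := by omega
      have h2 : (n + k) / 2 = n / 2 + k / 2 := by omega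
      rw [hn2, hk2, h1, h2]; norm_num
    · have h1 : (n + k) % 2 = 0 := by omega
      rw [hn2, hk2, h1]
      norm_num
  
/-- The B-representation of the reverse of a sequence of period `2^t` with coefficients `c`
is obtained by replacing each binomial sequence `C(·, k)` by `Σ_{i ≤ k} C(k, i) C(·, i) mod 2`. -/
theorem reverse_sequence_B_representation (t : ℕ) (c : Fin (2 ^ t) → ZMod 2)
    (s : ℕ → ZMod 2)
    (hs : ∀ n : ℕ, s n = ∑ k : Fin (2 ^ t), c k * (n.choose (k : ℕ) : ZMod 2)) :
    ∀ n : ℕ, n < 2 ^ t →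
      s (2 ^ t - 1 - n) =
        ∑ k : Fin (2 ^ t), c k *
          ∑ i ∈ Finset.range ((k : ℕ) + 1),
            ((k : ℕ).choose i : ZMod 2) * (n.choose i : ZMod 2) := by
  intro n hn
  rw [hs]
  refine Finset.sum_congr rfl fun k _ => ?_
  congr 1
  rw [key t n k hn k.isLt, vander_sym n k]
  push_cast
  rfl
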